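/- Suppose f is continuously differentiable, x ↦ f(x, ξ) is convex for every ξ ∈ ℝ^m, C ⊆ ℝ^{nd} × ℝ_{≥0}ⁿ is closed and convex, and L̃_aug is convex-concave on C × (ℝⁿ × ℝ^{nd} × ℝ^{mN}), i.e., convex in (x_v, λ_v) ∈ C for fixed (ν, η, {ξ^k}) and concave in (ν, η, {ξ^k}) for fixed (x_v, λ_v) ∈ C. Let (x_v*, λ_v*, ν*, η*, {(ξ*)^k}) be a saddle point of L̃_aug over C × (ℝⁿ × ℝ^{nd} × ℝ^{mN}) with (x_v*, λ_v*) in the interior of C, and suppose that for every k the map ξ ↦ g_k((x_v*)^{v_k}, (λ_v*)^{v_k}, ξ) is strongly concave. If (x_v, λ_v) ∈ C and (ν, η, {ξ^k}) ∈ ℝⁿ × ℝ^{nd} × ℝ^{mN} satisfy L̃_aug(x_v*, λ_v*, ν, η, {ξ^k}) = L̃_aug(x_v*, λ_v*, ν*, η*, {(ξ*)^k}) = L̃_aug(x_v, λ_v, ν*, η*, {(ξ*)^k}), then ξ^k = (ξ*)^k for all k ∈ {1, …, N}, and there exist x ∈ ℝ^d and λ ∈ ℝ such that x_v = 𝟙ₙ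 ⊗ x and λ_v = λ𝟙ₙ. -/

import Mathlib

open scoped BigOperators RealInnerProductSpace
open Finset

noncomputable section

/-- `d`-dimensional Euclidean space. -/
abbrev Vec (d : ℕ) := EuclideanSpace ℝ (Fin d)

/-- g_k(x, λ, ξ) := f(x, ξ) − λ‖ξ − ξ̂ᵏ‖². -/
def gk {d m N : ℕ} (f : Vec d → Vec m → ℝ) (ξhat : Fin N → Vec m) (k : Fin N)
    (x : Vec d) (lam : ℝ) (ξ : Vec m) : ℝ :=
  f x ξ - lam * ‖ξ - ξhat k‖ ^ 2

/-- Centralized objective J(x, λ) := λε² + (1/N) Σ_k sup_ξ g_k(x, λ, ξ), in extended reals. -/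
def Jobj {d m N : ℕ} (ε : ℝ) (f : Vec d → Vec m → ℝ) (ξhat : Fin N → Vec m)
    (x : Vec d) (lam : ℝ) : EReal :=
  ((lam * ε ^ 2 : ℝ) : EReal)
    + ((1 / (N : ℝ) : ℝ) : EReal) *
        ∑ k : Fin N, ⨆ ξ : Vec m, ((gk f ξhat k x lam ξ : ℝ) : EReal)

/-- Distributed objective F(x_v, λ_v), in extended reals. -/
def Fobj {d m n N : ℕ} (ε : ℝ) (f : Vec d → Vec m → ℝ) (ξhat : Fin N → Vec m)
    (v : Fin N → Fin n) (xv : Fin n → Vec d) (lv : Fin n → ℝ) : EReal :=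
  ((ε ^ 2 / (n : ℝ) * ∑ i, lv i : ℝ) : EReal)
    + ((1 / (N : ℝ) : ℝ) : EReal) *
        ∑ k : Fin N, ⨆ ξ : Vec m, ((gk f ξhat k (xv (v k)) (lv (v k)) ξ : ℝ) : EReal)

/-- Feasible set of the distributed problem: λ_v ≥ 0, 𝖫λ_v = 0, (𝖫 ⊗ I_d)x_v = 0. -/
def Feas {d n : ℕ} (Lap : Matrix (Fin n) (Fin n) ℝ) :
    Set ((Fin n → Vec d) × (Fin n → ℝ)) :=
  {p | (∀ i, 0 ≤ p.2 i) ∧ Lap.mulVec p.2 = 0 ∧ ∀ i : Fin n, ∑ j : Fin n, Lap i j • p.1 j = 0}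

/-- Lagrangian L(x_v, λ_v, ν, η) := F(x_v, λ_v) + νᵀ𝖫λ_v + ηᵀ(𝖫 ⊗ I_d)x_v. -/
def Lagr {d m n N : ℕ} (ε : ℝ) (f : Vec d → Vec m → ℝ) (ξhat : Fin N → Vec m)
    (v : Fin N → Fin n) (Lap : Matrix (Fin n) (Fin n) ℝ)
    (xv : Fin n → Vec d) (lv : Fin n → ℝ) (ν : Fin n → ℝ) (η : Fin n → Vec d) : EReal :=
  Fobj ε f ξhat v xv lv
    + ((∑ i, ν i * Lap.mulVec lv i
        + ∑ i, (inner ℝ (η i) (∑ j : Fin n, Lap i j • xv j) : ℝ) : ℝ) : EReal)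

/-- Augmented Lagrangian L_aug := L + (1/2)x_vᵀ(𝖫 ⊗ I_d)x_v + (1/2)λ_vᵀ𝖫λ_v. -/
def LagrAug {d m n N : ℕ} (ε : ℝ) (f : Vec d → Vec m → ℝ) (ξhat : Fin N → Vec m)
    (v : Fin N → Fin n) (Lap : Matrix (Fin n) (Fin n) ℝ)
    (xv : Fin n → Vec d) (lv : Fin n → ℝ) (ν : Fin n → ℝ) (η : Fin n → Vec d) : EReal :=
  Lagr ε f ξhat v Lap xv lv ν η
    + (((1 / 2 : ℝ) * ∑ i, (inner ℝ (xv i) (∑ j : Fin n, Lap i j • xv j) : ℝ)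
        + (1 / 2 : ℝ) * ∑ i, lv i * Lap.mulVec lv i : ℝ) : EReal)

/-- L̃_aug(x_v, λ_v, ν, η, {ξ^k}), real-valued. -/
def Ltld {d m n N : ℕ} (ε : ℝ) (f : Vec d → Vec m → ℝ) (ξhat : Fin N → Vec m)
    (v : Fin N → Fin n) (Lap : Matrix (Fin n) (Fin n) ℝ)
    (xv : Fin n → Vec d) (lv : Fin n → ℝ) (ν : Fin n → ℝ) (η : Fin n → Vec d)
    (ξs : Fin N → Vec m) : ℝ :=
  ε ^ 2 / (n : ℝ) * ∑ i, lv i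
    + (1 / (N : ℝ)) * ∑ k : Fin N, gk f ξhat k (xv (v k)) (lv (v k)) (ξs k)
    + ∑ i, ν i * Lap.mulVec lv i
    + ∑ i, (inner ℝ (η i) (∑ j : Fin n, Lap i j • xv j) : ℝ)
    + (1 / 2 : ℝ) * ∑ i, (inner ℝ (xv i) (∑ j : Fin n, Lap i j • xv j) : ℝ)
    + (1 / 2 : ℝ) * ∑ i, lv i * Lap.mulVec lv i

/-!
Strong concavity of each `g_k` makes the maximiser of `ξ ↦ L̃_aug(x*, λ*, ν*, η*, ξ)` unique, and
`ξ` attains that maximum, so `ξ = ξ*`. At the saddle point `L̃_aug` is maximal in `(ν, η)`, on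
which it depends affinely, so `𝖫λ* = 0` and `(𝖫 ⊗ I)x* = 0`. The midpoint of `(x*, λ*)` and
`(x, λ)` lies in `C`, so its value is at least the saddle value; but convexity of `f` and the
quadratic penalties put it below the common value at the endpoints by
`((x* - x)ᵀ(𝖫 ⊗ I)(x* - x) + (λ* - λ)ᵀ𝖫(λ* - λ)) / 8`. Both forms therefore vanish, `𝖫`
annihilates the differences, and `ker 𝖫 = span 𝟙` gives consensus.
-/

open scoped Matrix MatrixOrder

section KroneckerIdentity

variable {ι κ E : Type*} [Fintype ι] [NormedAddCommGroup E] [InnerProductSpace ℝ E]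

/-- `kronMulVec L a` is `(L ⊗ I) a` for a stacked vector `a = (a¹; …; aⁿ)` with blocks in `E`. -/
def kronMulVec (L : Matrix κ ι ℝ) : (ι → E) →ₗ[ℝ] κ → E where
  toFun a i := ∑ j, L i j • a j
  map_add' a b := by ext i; simp [smul_add, sum_add_distrib]
  map_smul' c a := by ext i; simp [smul_sum, smul_comm c]

@[simp] lemma kronMulVec_apply (L : Matrix κ ι ℝ) (a : ι → E) (i : κ) :
    kronMulVec L a i = ∑ j, L i j • a j := rfl

lemma kronMulVec_eq_mulVec (L : Matrix κ ι ℝ) (a : ι → ℝ) : kronMulVec L a = L *ᵥ a := by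
  ext i; simp [Matrix.mulVec, dotProduct]

lemma kronMulVec_mul [Fintype κ] {μ : Type*} (A : Matrix μ κ ℝ) (B : Matrix κ ι ℝ) (a : ι → E) :
    kronMulVec (A * B) a = kronMulVec A (kronMulVec B a) := by
  ext i
  simp only [kronMulVec_apply, Matrix.mul_apply, sum_smul, smul_sum, smul_smul]
  exact sum_comm

lemma sum_inner_kronMulVec_transpose [Fintype κ] (B : Matrix κ ι ℝ) (a : ι → E) (c : κ → E) :
    ∑ i, ⟪a i, kronMulVec Bᵀ c i⟫ = ∑ k, ⟪kronMulVec B a k, c k⟫ := by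
  simp only [kronMulVec_apply, Matrix.transpose_apply, inner_sum, sum_inner, inner_smul_left,
    inner_smul_right, conj_trivial]
  exact sum_comm

def kronForm (L : Matrix ι ι ℝ) (a : ι → E) : ℝ := ∑ i, ⟪a i, kronMulVec L a i⟫

lemma kronForm_eq_sum_mul_mulVec (L : Matrix ι ι ℝ) (a : ι → ℝ) :
    kronForm L a = ∑ i, a i * (L *ᵥ a) i := by
  simp only [kronForm, kronMulVec_eq_mulVec, Real.inner_apply]

lemma kronForm_midpoint (L : Matrix ι ι ℝ) (a b : ι → E) :
    kronForm L ((1 / 2 : ℝ) • a + (1 / 2 : ℝ) • b)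
      = kronForm L a / 2 + kronForm L b / 2 - kronForm L (a - b) / 4 := by
  simp only [kronForm, map_add, map_smul, map_sub, sum_div, ← sum_add_distrib, ← sum_sub_distrib]
  refine sum_congr rfl fun i _ => ?_
  simp only [Pi.add_apply, Pi.smul_apply, Pi.sub_apply, inner_add_left, inner_add_right,
    inner_sub_left, inner_sub_right, real_inner_smul_left, real_inner_smul_right]
  ring

lemma kronForm_transpose_mul_self [Fintype κ] (B : Matrix κ ι ℝ) (a : ι → E) :
    kronForm (Bᵀ * B) a = ∑ k, ‖kronMulVec B a k‖ ^ 2 := by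
  simp only [kronForm, kronMulVec_mul, sum_inner_kronMulVec_transpose, real_inner_self_eq_norm_sq]

lemma Matrix.PosSemidef.exists_eq_transpose_mul_self {L : Matrix ι ι ℝ} (hL : L.PosSemidef) :
    ∃ B : Matrix ι ι ℝ, L = Bᵀ * B := by
  classical exact CStarAlgebra.nonneg_iff_eq_star_mul_self.mp hL.nonneg

lemma kronForm_nonneg {L : Matrix ι ι ℝ} (hL : L.PosSemidef) (a : ι → E) : 0 ≤ kronForm L a := by
  obtain ⟨B, rfl⟩ := hL.exists_eq_transpose_mul_self
  rw [kronForm_transpose_mul_self]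
  positivity

lemma kronMulVec_eq_zero_of_kronForm_eq_zero {L : Matrix ι ι ℝ} (hL : L.PosSemidef)
    {a : ι → E} (h : kronForm L a = 0) : kronMulVec L a = 0 := by
  obtain ⟨B, rfl⟩ := hL.exists_eq_transpose_mul_self
  rw [kronForm_transpose_mul_self, sum_eq_zero_iff_of_nonneg fun k _ => by positivity] at h
  have hB : kronMulVec B a = 0 := funext fun k => by simpa using h k (mem_univ k)
  rw [kronMulVec_mul, hB, map_zero]

/-- Testing against every `e : E` reduces consensus of `E`-valued vectors to the scalar kernel. -/
lemma exists_eq_const_of_kronMulVec_eq_zero {L : Matrix ι ι ℝ}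
    (hker : ∀ w : ι → ℝ, L *ᵥ w = 0 → ∃ c : ℝ, w = fun _ => c) {a : ι → E}
    (h : kronMulVec L a = 0) : ∃ c : E, a = fun _ => c := by
  rcases isEmpty_or_nonempty ι with hι | ⟨⟨i₀⟩⟩
  · exact ⟨0, Subsingleton.elim _ _⟩
  refine ⟨a i₀, funext fun j => ext_inner_left ℝ fun e => ?_⟩
  obtain ⟨c, hc⟩ := hker (fun j => ⟪e, a j⟫) <| funext fun i => by
    simpa [Matrix.mulVec, dotProduct, inner_sum, real_inner_smul_right] using
      congrArg (fun s => ⟪e, s i⟫) h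
  exact (congrFun hc j).trans (congrFun hc i₀).symm

lemma exists_eq_const_of_kronForm_sub_eq_zero {L : Matrix ι ι ℝ} (hL : L.PosSemidef)
    (hker : ∀ w : ι → ℝ, L *ᵥ w = 0 → ∃ c : ℝ, w = fun _ => c) {s a : ι → E}
    (hs : kronMulVec L s = 0) (h : kronForm L (s - a) = 0) : ∃ c : E, a = fun _ => c := by
  refine exists_eq_const_of_kronMulVec_eq_zero hker ?_
  simpa [hs] using kronMulVec_eq_zero_of_kronForm_eq_zero hL h

end KroneckerIdentity

lemma eq_zero_of_forall_sum_inner_le {ι E : Type*} [Fintype ι] [NormedAddCommGroup E]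
    [InnerProductSpace ℝ E] {s y₀ : ι → E} (h : ∀ y : ι → E, ∑ i, ⟪y i, s i⟫ ≤ ∑ i, ⟪y₀ i, s i⟫) :
    s = 0 := by
  have hle := h (y₀ + s)
  simp only [Pi.add_apply, inner_add_left, sum_add_distrib, real_inner_self_eq_norm_sq,
    add_le_iff_nonpos_right] at hle
  have hzero := (sum_eq_zero_iff_of_nonneg fun i _ => by positivity).mp
    (le_antisymm hle (by positivity))
  exact funext fun i => by simpa using hzero i (mem_univ i)

/-- The midpoint of two maximisers would do strictly better. -/
lemma eq_of_forall_sum_le_of_strongConcaveOn {ι E : Type*} [Fintype ι] [NormedAddCommGroup E]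
    [NormedSpace ℝ E] (g : ι → E → ℝ) (hg : ∀ k, ∃ μ, 0 < μ ∧ StrongConcaveOn Set.univ μ (g k))
    {a b : ι → E} (hmax : ∀ c : ι → E, ∑ k, g k (c k) ≤ ∑ k, g k (b k))
    (hle : ∑ k, g k (b k) ≤ ∑ k, g k (a k)) : a = b := by
  by_contra hne
  obtain ⟨k₀, hk₀⟩ := Function.ne_iff.mp hne
  choose μ hμ hconc using hg
  have hmid : ∀ k, g k (a k) / 2 + g k (b k) / 2 + μ k / 8 * ‖a k - b k‖ ^ 2
      ≤ g k ((1 / 2 : ℝ) • a k + (1 / 2 : ℝ) • b k) := fun k => by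
    have := (hconc k).2 (Set.mem_univ (a k)) (Set.mem_univ (b k)) (by norm_num : (0 : ℝ) ≤ 1 / 2)
      (by norm_num : (0 : ℝ) ≤ 1 / 2) (by norm_num)
    simp only [smul_eq_mul] at this
    linarith
  have hlt : ∑ k, (g k (a k) / 2 + g k (b k) / 2)
      < ∑ k, g k ((1 / 2 : ℝ) • a k + (1 / 2 : ℝ) • b k) := by
    refine sum_lt_sum (fun k _ => ?_) ⟨k₀, mem_univ k₀, ?_⟩
    · exact (le_add_of_nonneg_right (by have := hμ k; positivity)).trans (hmid k)
    · have : 0 < μ k₀ / 8 * ‖a k₀ - b k₀‖ ^ 2 := by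
        have := norm_pos_iff.mpr (sub_ne_zero.mpr hk₀)
        have := hμ k₀
        positivity
      linarith [hmid k₀]
  have := hmax fun k => (1 / 2 : ℝ) • a k + (1 / 2 : ℝ) • b k
  rw [sum_add_distrib, ← sum_div, ← sum_div] at hlt
  linarith

section Lagrangian

variable {d m n N : ℕ} (ε : ℝ) (f : Vec d → Vec m → ℝ) (ξhat : Fin N → Vec m)
  (v : Fin N → Fin n) (Lap : Matrix (Fin n) (Fin n) ℝ)

lemma Ltld_eq (xv : Fin n → Vec d) (lv ν : Fin n → ℝ) (η : Fin n → Vec d) (ξs : Fin N → Vec m) :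
    Ltld ε f ξhat v Lap xv lv ν η ξs
      = ε ^ 2 / n * ∑ i, lv i + 1 / N * ∑ k, gk f ξhat k (xv (v k)) (lv (v k)) (ξs k)
        + ∑ i, ⟪ν i, kronMulVec Lap lv i⟫ + ∑ i, ⟪η i, kronMulVec Lap xv i⟫
        + kronForm Lap xv / 2 + kronForm Lap lv / 2 := by
  rw [kronForm_eq_sum_mul_mulVec, kronMulVec_eq_mulVec]
  simp only [Ltld, kronForm, kronMulVec_apply, Real.inner_apply]
  ring

variable {f} in
lemma convexOn_gk {ξ : Vec m} (hconv : ConvexOn ℝ Set.univ fun x => f x ξ) (k : Fin N) :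
    ConvexOn ℝ Set.univ fun p : Vec d × ℝ => gk f ξhat k p.1 p.2 ξ := by
  refine ⟨convex_univ, fun p _ q _ a b ha hb hab => ?_⟩
  have := hconv.2 (Set.mem_univ p.1) (Set.mem_univ q.1) ha hb hab
  simp only [gk, Prod.fst_add, Prod.smul_fst, Prod.snd_add, Prod.smul_snd, smul_eq_mul] at this ⊢
  linarith

variable {f} in
lemma Ltld_midpoint_le (hconv : ∀ ξ : Vec m, ConvexOn ℝ Set.univ fun x => f x ξ)
    (x x' : Fin n → Vec d) (l l' ν : Fin n → ℝ) (η : Fin n → Vec d) (ξs : Fin N → Vec m) :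
    Ltld ε f ξhat v Lap ((1 / 2 : ℝ) • x + (1 / 2 : ℝ) • x') ((1 / 2 : ℝ) • l + (1 / 2 : ℝ) • l')
        ν η ξs
      ≤ Ltld ε f ξhat v Lap x l ν η ξs / 2 + Ltld ε f ξhat v Lap x' l' ν η ξs / 2
        - (kronForm Lap (x - x') + kronForm Lap (l - l')) / 8 := by
  have hg : ∑ k, gk f ξhat k (((1 / 2 : ℝ) • x + (1 / 2 : ℝ) • x') (v k))
        (((1 / 2 : ℝ) • l + (1 / 2 : ℝ) • l') (v k)) (ξs k)
      ≤ (∑ k, gk f ξhat k (x (v k)) (l (v k)) (ξs k)) / 2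
        + (∑ k, gk f ξhat k (x' (v k)) (l' (v k)) (ξs k)) / 2 := by
    rw [sum_div, sum_div, ← sum_add_distrib]
    refine sum_le_sum fun k _ => ?_
    have := (convexOn_gk ξhat (hconv (ξs k)) k).2 (Set.mem_univ (x (v k), l (v k)))
      (Set.mem_univ (x' (v k), l' (v k))) (by norm_num : (0 : ℝ) ≤ 1 / 2)
      (by norm_num : (0 : ℝ) ≤ 1 / 2) (by norm_num)
    simp only [Prod.smul_mk, Prod.mk_add_mk, smul_eq_mul] at this
    simp only [Pi.add_apply, Pi.smul_apply, smul_eq_mul]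
    linarith
  have hN : (0 : ℝ) ≤ 1 / N := by positivity
  rw [Ltld_eq, Ltld_eq, Ltld_eq, kronForm_midpoint, kronForm_midpoint]
  simp only [map_add, map_smul, Pi.add_apply, Pi.smul_apply, inner_add_right,
    real_inner_smul_right, sum_add_distrib, ← mul_sum, ← smul_sum] at hg ⊢
  simp only [smul_eq_mul] at hg ⊢
  linarith [mul_le_mul_of_nonneg_left hg hN]

variable {ε f ξhat v Lap} in
lemma sum_gk_le_of_Ltld_le (hN : 0 < N) {xv : Fin n → Vec d} {lv ν : Fin n → ℝ}
    {η : Fin n → Vec d} {ξs ξs' : Fin N → Vec m}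
    (h : Ltld ε f ξhat v Lap xv lv ν η ξs ≤ Ltld ε f ξhat v Lap xv lv ν η ξs') :
    ∑ k, gk f ξhat k (xv (v k)) (lv (v k)) (ξs k)
      ≤ ∑ k, gk f ξhat k (xv (v k)) (lv (v k)) (ξs' k) := by
  rw [Ltld_eq, Ltld_eq] at h
  exact le_of_mul_le_mul_left (by linarith) (by positivity : (0 : ℝ) < 1 / N)

end Lagrangian

theorem invariant_set_characterization_general
    {d m n N : ℕ} (hN : 0 < N)
    (f : Vec d → Vec m → ℝ) (ξhat : Fin N → Vec m) (ε : ℝ)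
    (hconv : ∀ ξ : Vec m, ConvexOn ℝ Set.univ (fun x => f x ξ))
    (v : Fin N → Fin n)
    (Lap : Matrix (Fin n) (Fin n) ℝ) (hLpsd : Lap.PosSemidef)
    (hLker : ∀ w : Fin n → ℝ, Lap.mulVec w = 0 ↔ ∃ c : ℝ, w = fun _ => c)
    (C : Set ((Fin n → Vec d) × (Fin n → ℝ)))
    (hCconv : Convex ℝ C)
    (xvs : Fin n → Vec d) (lvs νs : Fin n → ℝ) (ηs : Fin n → Vec d)
    (ξss : Fin N → Vec m)
    (hint : ((xvs, lvs) : (Fin n → Vec d) × (Fin n → ℝ)) ∈ interior C)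
    (hsaddle₁ : ∀ (ν : Fin n → ℝ) (η : Fin n → Vec d) (ξs : Fin N → Vec m),
      Ltld ε f ξhat v Lap xvs lvs ν η ξs ≤ Ltld ε f ξhat v Lap xvs lvs νs ηs ξss)
    (hsaddle₂ : ∀ p ∈ C,
      Ltld ε f ξhat v Lap xvs lvs νs ηs ξss ≤ Ltld ε f ξhat v Lap p.1 p.2 νs ηs ξss)
    (hstrong : ∀ k : Fin N, ∃ μ : ℝ, 0 < μ ∧ ConcaveOn ℝ Set.univ
      (fun ξ : Vec m => gk f ξhat k (xvs (v k)) (lvs (v k)) ξ + μ / 2 * ‖ξ‖ ^ 2))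
    (xv : Fin n → Vec d) (lv ν : Fin n → ℝ) (η : Fin n → Vec d) (ξs : Fin N → Vec m)
    (hmem : ((xv, lv) : (Fin n → Vec d) × (Fin n → ℝ)) ∈ C)
    (heq₁ : Ltld ε f ξhat v Lap xvs lvs ν η ξs
      = Ltld ε f ξhat v Lap xvs lvs νs ηs ξss)
    (heq₂ : Ltld ε f ξhat v Lap xvs lvs νs ηs ξss
      = Ltld ε f ξhat v Lap xv lv νs ηs ξss) :
    (∀ k : Fin N, ξs k = ξss k) ∧
    (∃ (x : Vec d) (lam : ℝ), xv = (fun _ => x) ∧ lv = (fun _ => lam)) := by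
  have hξ : ξs = ξss :=
    eq_of_forall_sum_le_of_strongConcaveOn (fun k => gk f ξhat k (xvs (v k)) (lvs (v k)))
      (fun k => (hstrong k).imp fun _ h => ⟨h.1, strongConcaveOn_iff_convex.mpr h.2⟩)
      (fun c => sum_gk_le_of_Ltld_le hN (hsaddle₁ νs ηs c))
      (sum_gk_le_of_Ltld_le hN ((hsaddle₁ ν η ξss).trans heq₁.ge))
  have hlvs : kronMulVec Lap lvs = 0 := eq_zero_of_forall_sum_inner_le (y₀ := νs) fun ν' => by
    have h := hsaddle₁ ν' ηs ξss
    rw [Ltld_eq, Ltld_eq] at h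
    linarith
  have hxvs : kronMulVec Lap xvs = 0 := eq_zero_of_forall_sum_inner_le (y₀ := ηs) fun η' => by
    have h := hsaddle₁ νs η' ξss
    rw [Ltld_eq, Ltld_eq] at h
    linarith
  have hC : ((xvs, lvs) : (Fin n → Vec d) × (Fin n → ℝ)) ∈ C := interior_subset hint
  have hmid := hsaddle₂ _ (hCconv hC hmem (by norm_num : (0 : ℝ) ≤ 1 / 2)
    (by norm_num : (0 : ℝ) ≤ 1 / 2) (by norm_num))
  simp only [Prod.smul_mk, Prod.mk_add_mk] at hmid
  have hgap := Ltld_midpoint_le ε ξhat v Lap hconv xvs xv lvs lv νs ηs ξss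
  have hx0 := kronForm_nonneg hLpsd (xvs - xv)
  have hl0 := kronForm_nonneg hLpsd (lvs - lv)
  obtain ⟨x, hx⟩ := exists_eq_const_of_kronForm_sub_eq_zero hLpsd (fun w => (hLker w).1) hxvs
    (by linarith : kronForm Lap (xvs - xv) = 0)
  obtain ⟨lam, hlam⟩ := exists_eq_const_of_kronForm_sub_eq_zero hLpsd (fun w => (hLker w).1) hlvs
    (by linarith : kronForm Lap (lvs - lv) = 0)
  exact ⟨congrFun hξ, x, lam, hx, hlam⟩

/-- at a saddle point of L̃_aug interior to C with strongly concave
inner maximizations, points achieving equality of the saddle values satisfy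
ξ^k = (ξ*)^k for all k and are consensus points: x_v = 𝟙ₙ ⊗ x, λ_v = λ𝟙ₙ. -/
theorem invariant_set_characterization
    {d m n N : ℕ} (hn : 0 < n) (hN : 0 < N)
    (f : Vec d → Vec m → ℝ) (ξhat : Fin N → Vec m) (ε : ℝ) (hε : 0 < ε)
    (hf : ContDiff ℝ 1 (Function.uncurry f))
    (hconv : ∀ ξ : Vec m, ConvexOn ℝ Set.univ (fun x => f x ξ))
    (v : Fin N → Fin n) (hv : Function.Surjective v)
    (Lap : Matrix (Fin n) (Fin n) ℝ) (hLsym : Lap.IsSymm) (hLpsd : Lap.PosSemidef)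
    (hLker : ∀ w : Fin n → ℝ, Lap.mulVec w = 0 ↔ ∃ c : ℝ, w = fun _ => c)
    (C : Set ((Fin n → Vec d) × (Fin n → ℝ)))
    (hCclosed : IsClosed C) (hCconv : Convex ℝ C)
    (hCsub : ∀ p ∈ C, ∀ i, 0 ≤ p.2 i)
    (hcc₁ : ∀ (ν : Fin n → ℝ) (η : Fin n → Vec d) (ξs : Fin N → Vec m),
      ConvexOn ℝ C (fun p : (Fin n → Vec d) × (Fin n → ℝ) =>
        Ltld ε f ξhat v Lap p.1 p.2 ν η ξs))
    (hcc₂ : ∀ p ∈ C, ConcaveOn ℝ Set.univ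
      (fun q : (Fin n → ℝ) × (Fin n → Vec d) × (Fin N → Vec m) =>
        Ltld ε f ξhat v Lap p.1 p.2 q.1 q.2.1 q.2.2))
    (xvs : Fin n → Vec d) (lvs νs : Fin n → ℝ) (ηs : Fin n → Vec d)
    (ξss : Fin N → Vec m)
    (hint : ((xvs, lvs) : (Fin n → Vec d) × (Fin n → ℝ)) ∈ interior C)
    (hsaddle₁ : ∀ (ν : Fin n → ℝ) (η : Fin n → Vec d) (ξs : Fin N → Vec m),
      Ltld ε f ξhat v Lap xvs lvs ν η ξs ≤ Ltld ε f ξhat v Lap xvs lvs νs ηs ξss)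
    (hsaddle₂ : ∀ p ∈ C,
      Ltld ε f ξhat v Lap xvs lvs νs ηs ξss ≤ Ltld ε f ξhat v Lap p.1 p.2 νs ηs ξss)
    (hstrong : ∀ k : Fin N, ∃ μ : ℝ, 0 < μ ∧ ConcaveOn ℝ Set.univ
      (fun ξ : Vec m => gk f ξhat k (xvs (v k)) (lvs (v k)) ξ + μ / 2 * ‖ξ‖ ^ 2))
    (xv : Fin n → Vec d) (lv ν : Fin n → ℝ) (η : Fin n → Vec d) (ξs : Fin N → Vec m)
    (hmem : ((xv, lv) : (Fin n → Vec d) × (Fin n → ℝ)) ∈ C)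
    (heq₁ : Ltld ε f ξhat v Lap xvs lvs ν η ξs
      = Ltld ε f ξhat v Lap xvs lvs νs ηs ξss)
    (heq₂ : Ltld ε f ξhat v Lap xvs lvs νs ηs ξss
      = Ltld ε f ξhat v Lap xv lv νs ηs ξss) :
    (∀ k : Fin N, ξs k = ξss k) ∧
    (∃ (x : Vec d) (lam : ℝ), xv = (fun _ => x) ∧ lv = (fun _ => lam)) :=
  invariant_set_characterization_general hN f ξhat ε hconv v Lap hLpsd hLker C hCconv xvs lvs νs ηs
    ξss hint hsaddle₁ hsaddle₂ hstrong xv lv ν η ξs hmem heq₁ heq₂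

end
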